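/- arXiv:1809.07390 — 6 statements merged into one kernel-verified Lean document; each statement's English description precedes it below -/
import Mathlib

section
/- Let E ⊆ 𝔽₂^k be a linear subspace of dimension m ≥ 2, and enumerate its elements as e₀, e₁, …, e_{2^m−1} in strictly increasing order of their integer values |e| = ∑_{j=1}^{k} e_j·2^{k−j} (most significant bit on the left). Then e₀ = 0 and, for every i ∈ {0, 1, …, m−1} and every j with 2^i ≤ j ≤ 2^{i+1}−1, one has e_j = e_{2^i} ⊕ e_{j−2^i}, where ⊕ denotes coordinatewise addition in 𝔽₂^k. -/
/-- The integer value of a binary vector `v ∈ 𝔽₂^k`, with the most significant bit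
on the left: `|v| = ∑_{j=1}^{k} v_j · 2^{k-j}`. -/
def intVal {k : ℕ} (v : Fin k → ZMod 2) : ℕ :=
  ∑ j : Fin k, (v j).val * 2 ^ (k - 1 - (j : ℕ))

/-!
Suppose the first `N` elements of `E` form a set `L` closed under addition, and let `a = e N`
be the least element of `E` outside `L`. The order is lexicographic, so if `x < y` but
`a + y < a + x`, then `a + x + y < a`: the vectors first differ where `x` and `y` do, and `a`
has a one there. Since `a + x + y ∉ L`, minimality of `a` forbids this, so `x ↦ a + x` is
increasing on `L`; the same trick puts the coset `a + L` below every other element of `E ∖ L`.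
Hence `e (N + r) = a + e r` for `r < N`, and the first `2N` elements, `L ∪ (a + L)`, are again
closed under addition. Induction on `i` with `N = 2 ^ i` gives the theorem.
-/

lemma intVal_succ {k : ℕ} (v : Fin (k + 1) → ZMod 2) :
    intVal v = (v 0).val * 2 ^ k + intVal (Fin.tail v) := by
  simp only [intVal, Fin.sum_univ_succ, Fin.tail, Fin.val_zero, Fin.val_succ,
    add_tsub_cancel_right, Nat.sub_zero, Nat.sub_sub, Nat.add_comm 1]

lemma intVal_lt_two_pow {k : ℕ} (v : Fin k → ZMod 2) : intVal v < 2 ^ k := by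
  induction k with
  | zero => simp [intVal]
  | succ k ih =>
    have hv0 : (v 0).val ≤ 1 := Nat.le_of_lt_succ (ZMod.val_lt (v 0))
    have := ih (Fin.tail v)
    rw [intVal_succ, pow_succ]
    nlinarith

lemma intVal_lt_intVal {k : ℕ} {u v : Fin k → ZMod 2} (i : Fin k)
    (heq : ∀ j < i, u j = v j) (hu : u i = 0) (hv : v i = 1) : intVal u < intVal v := by
  induction k with
  | zero => exact i.elim0
  | succ k ih =>
    rw [intVal_succ, intVal_succ]
    induction i using Fin.cases with
    | zero =>
      have := intVal_lt_two_pow (Fin.tail u)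
      rw [hu, hv, ZMod.val_zero, show (1 : ZMod 2).val = 1 from rfl]
      omega
    | succ i =>
      have htail : intVal (Fin.tail u) < intVal (Fin.tail v) :=
        ih i (fun j hj => heq j.succ (Fin.succ_lt_succ_iff.2 hj)) hu hv
      rw [heq 0 (Fin.succ_pos i)]
      omega

lemma exists_forall_lt_eq_and_ne {k : ℕ} {u v : Fin k → ZMod 2} (h : u ≠ v) :
    ∃ i, (∀ j < i, u j = v j) ∧ u i ≠ v i := by
  obtain ⟨i, hi, hmin⟩ := wellFounded_lt.has_min {i | u i ≠ v i} (Function.ne_iff.1 h)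
  exact ⟨i, fun j hj => not_not.1 fun hne => hmin j hne hj, hi⟩

lemma zmod_two_cases_of_ne {a b : ZMod 2} (h : a ≠ b) : a = 0 ∧ b = 1 ∨ a = 1 ∧ b = 0 := by
  revert a b; decide

lemma intVal_injective (k : ℕ) : Function.Injective (intVal (k := k)) := by
  intro u v h
  by_contra hne
  obtain ⟨i, heq, hne⟩ := exists_forall_lt_eq_and_ne hne
  rcases zmod_two_cases_of_ne hne with ⟨hu, hv⟩ | ⟨hu, hv⟩
  · exact (intVal_lt_intVal i heq hu hv).ne h
  · exact (intVal_lt_intVal i (fun j hj => (heq j hj).symm) hv hu).ne h.symm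

lemma intVal_lt_intVal_iff {k : ℕ} {u v : Fin k → ZMod 2} :
    intVal u < intVal v ↔ ∃ i, (∀ j < i, u j = v j) ∧ u i = 0 ∧ v i = 1 := by
  refine ⟨fun h => ?_, fun ⟨i, heq, hu, hv⟩ => intVal_lt_intVal i heq hu hv⟩
  obtain ⟨i, heq, hne⟩ := exists_forall_lt_eq_and_ne (ne_of_apply_ne intVal h.ne)
  refine ⟨i, heq, ?_⟩
  rcases zmod_two_cases_of_ne hne with hi | ⟨hu, hv⟩
  · exact hi
  · exact absurd h (intVal_lt_intVal i (fun j hj => (heq j hj).symm) hv hu).not_gt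

lemma intVal_add_add_lt {k : ℕ} {a x y : Fin k → ZMod 2} (hxy : intVal x < intVal y)
    (hyx : intVal (a + y) < intVal (a + x)) : intVal (a + (x + y)) < intVal a := by
  obtain ⟨i, heq, hx, hy⟩ := intVal_lt_intVal_iff.1 hxy
  have ha : a i = 1 := by
    by_contra ha
    have ha : a i = 0 := (by decide : ∀ z : ZMod 2, z ≠ 1 → z = 0) _ ha
    refine hyx.not_gt (intVal_lt_intVal i (fun j hj => ?_) ?_ ?_)
    · simp only [Pi.add_apply, heq j hj]
    · simp only [Pi.add_apply, ha, hx, zero_add]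
    · simp only [Pi.add_apply, ha, hy, zero_add]
  refine intVal_lt_intVal i (fun j hj => ?_) ?_ ha
  · simp only [Pi.add_apply, heq j hj, ZModModule.add_self, add_zero]
  · rw [Pi.add_apply, Pi.add_apply, ha, hx, hy]
    decide

namespace ZModModule

variable {G : Type*} [AddCommGroup G] [Module (ZMod 2) G]

lemma add_add_cancel_left (a b : G) : a + (a + b) = b := by
  rw [← add_assoc, add_self, zero_add]

lemma add_add_cancel_right (a b : G) : a + b + b = a := by
  rw [add_assoc, add_self, add_zero]

end ZModModule

open ZModModule

def AddClosedUpTo {G : Type*} [Add G] (e : ℕ → G) (N : ℕ) : Prop :=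
  ∀ r < N, ∀ s < N, ∃ t < N, e t = e r + e s

section Enumeration

variable {k M N : ℕ} {e : ℕ → Fin k → ZMod 2}

lemma enum_zero_eq_zero (hmono : StrictMonoOn (fun n => intVal (e n)) (Set.Iio M))
    (hadd : AddClosedUpTo e M) (hM : 0 < M) : e 0 = 0 := by
  obtain ⟨t, ht, het⟩ := hadd 0 hM 0 hM
  rw [add_self] at het
  rcases t.eq_zero_or_pos with rfl | htpos
  · exact het
  · have := hmono (Set.mem_Iio.2 hM) ht htpos
    simp [het, intVal] at this

lemma AddClosedUpTo.enum_ne_add (hN : AddClosedUpTo e N)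
    (hmono : StrictMonoOn (fun n => intVal (e n)) (Set.Iio M)) (hNM : N < M) {q r : ℕ}
    (hq : q < N) (hr : r < N) : e q ≠ e N + e r := by
  intro h
  obtain ⟨t, ht, het⟩ := hN q hq r hr
  have : e t = e N := by rw [het, h, add_add_cancel_right]
  exact ht.ne (hmono.injOn (ht.trans hNM) hNM (congrArg intVal this))

lemma AddClosedUpTo.intVal_add_lt_add (hN : AddClosedUpTo e N)
    (hmono : StrictMonoOn (fun n => intVal (e n)) (Set.Iio M)) (hadd : AddClosedUpTo e M)
    (hNM : N < M) {r s : ℕ} (hrs : r < s) (hs : s < N) :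
    intVal (e N + e r) < intVal (e N + e s) := by
  have hr : r < N := hrs.trans hs
  rcases lt_trichotomy (intVal (e N + e r)) (intVal (e N + e s)) with h | h | h
  · exact h
  · have := add_left_cancel (intVal_injective k h)
    exact absurd (hmono.injOn (hr.trans hNM) (hs.trans hNM) (congrArg intVal this)) hrs.ne
  · have hX := intVal_add_add_lt (hmono (hr.trans hNM) (hs.trans hNM) hrs) h
    obtain ⟨t, ht, het⟩ := hN r hr s hs
    obtain ⟨q, hq, heq⟩ := hadd N hNM t (ht.trans hNM)
    rw [← het, ← heq, hmono.lt_iff_lt hq hNM] at hX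
    exact absurd heq (hN.enum_ne_add hmono hNM hX ht)

lemma AddClosedUpTo.intVal_add_lt_of_forall_ne (hN : AddClosedUpTo e N)
    (hmono : StrictMonoOn (fun n => intVal (e n)) (Set.Iio M)) (hadd : AddClosedUpTo e M)
    {q s : ℕ} (hNq : N ≤ q) (hq : q < M) (hne : ∀ r < N, e q ≠ e N + e r) (hs : s < N) :
    intVal (e N + e s) < intVal (e q) := by
  have hNM : N < M := hNq.trans_lt hq
  rcases lt_trichotomy (intVal (e N + e s)) (intVal (e q)) with h | h | h
  · exact h
  · exact absurd (intVal_injective k h).symm (hne s hs)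
  · obtain ⟨p, hp, hep⟩ := hadd N hNM q hq
    have hNp : N ≤ p := not_lt.1 fun hpN => hne p hpN (by rw [hep, add_add_cancel_left])
    have hX := intVal_add_add_lt (a := e N) h (by
      rw [add_add_cancel_left, ← hep, hmono.lt_iff_lt (hs.trans hNM) hp]; omega)
    rw [add_left_comm, add_add_cancel_left] at hX
    obtain ⟨w, hw, hew⟩ := hadd q hq s (hs.trans hNM)
    rw [← hew, hmono.lt_iff_lt hw hNM] at hX
    obtain ⟨d, hd, hed⟩ := hN w hX s hs
    have : e d = e q := by rw [hed, hew, add_add_cancel_right]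
    have := hmono.injOn (hd.trans hNM) hq (congrArg intVal this)
    omega

lemma AddClosedUpTo.enum_add_eq_add (hN : AddClosedUpTo e N)
    (hmono : StrictMonoOn (fun n => intVal (e n)) (Set.Iio M)) (hadd : AddClosedUpTo e M)
    (h2N : 2 * N ≤ M) (r : ℕ) (hr : r < N) : e (N + r) = e N + e r := by
  induction r using Nat.strong_induction_on with
  | _ r ih =>
    have hNM : N < M := by omega
    have hinj : ∀ {a b}, a < M → b < M → e a = e b → a = b :=
      fun ha hb h => hmono.injOn ha hb (congrArg intVal h)
    obtain ⟨q, hq, heq⟩ := hadd N hNM r (by omega)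
    have hNq : N ≤ q := not_lt.1 fun hqN => hN.enum_ne_add hmono hNM hqN hr heq
    have hrq : N + r ≤ q := by
      by_contra! hqr
      have hs : q - N < r := by omega
      rw [← Nat.add_sub_cancel' hNq, ih _ hs (hs.trans hr)] at heq
      exact hs.ne (hinj (by omega) (by omega) (add_left_cancel heq))
    rcases hrq.eq_or_lt with h | hlt
    · rw [h, heq]
    suffices intVal (e q) < intVal (e (N + r)) from
      absurd (hmono (show N + r < M by omega) hq hlt) this.not_gt
    rw [heq]
    by_cases hmem : ∃ s < N, e (N + r) = e N + e s
    · obtain ⟨s, hs, hes⟩ := hmem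
      rcases lt_trichotomy s r with hsr | rfl | hrs
      · have := hinj (by omega) (by omega) (hes.trans (ih s hsr hs).symm)
        omega
      · exact absurd (hinj (by omega) hq (hes.trans heq.symm)) hlt.ne
      · exact hes ▸ hN.intVal_add_lt_add hmono hadd hNM hrs hs
    · push Not at hmem
      exact hN.intVal_add_lt_of_forall_ne hmono hadd (by omega) (by omega) hmem hr

lemma AddClosedUpTo.two_mul (hN : AddClosedUpTo e N)
    (htrans : ∀ r < N, e (N + r) = e N + e r) : AddClosedUpTo e (2 * N) := by
  intro a ha c hc
  rcases lt_or_ge a N with haN | haN <;> rcases lt_or_ge c N with hcN | hcN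
  · obtain ⟨t, ht, het⟩ := hN a haN c hcN
    exact ⟨t, by omega, het⟩
  · obtain ⟨c, rfl⟩ := Nat.exists_eq_add_of_le hcN
    obtain ⟨t, ht, het⟩ := hN a haN c (by omega)
    exact ⟨N + t, by omega, by rw [htrans c (by omega), htrans t ht, het, add_left_comm]⟩
  · obtain ⟨a, rfl⟩ := Nat.exists_eq_add_of_le haN
    obtain ⟨t, ht, het⟩ := hN a (by omega) c hcN
    exact ⟨N + t, by omega, by rw [htrans a (by omega), htrans t ht, het, add_assoc]⟩
  · obtain ⟨a, rfl⟩ := Nat.exists_eq_add_of_le haN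
    obtain ⟨c, rfl⟩ := Nat.exists_eq_add_of_le hcN
    obtain ⟨t, ht, het⟩ := hN a (by omega) c (by omega)
    refine ⟨t, by omega, ?_⟩
    rw [htrans a (by omega), htrans c (by omega), het, add_add_add_comm, add_self, zero_add]

lemma addClosedUpTo_two_pow (hmono : StrictMonoOn (fun n => intVal (e n)) (Set.Iio M))
    (hadd : AddClosedUpTo e M) (i : ℕ) (hi : 2 ^ i ≤ M) : AddClosedUpTo e (2 ^ i) := by
  induction i with
  | zero =>
    intro r hr s hs
    obtain ⟨rfl, rfl⟩ : r = 0 ∧ s = 0 := by simp_all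
    exact ⟨0, hr, by rw [enum_zero_eq_zero hmono hadd hi, add_zero]⟩
  | succ i ih =>
    rw [pow_succ, mul_comm] at hi ⊢
    have hN := ih (by omega)
    exact hN.two_mul (hN.enum_add_eq_add hmono hadd hi)

end Enumeration

/-- If `E ⊆ 𝔽₂^k` is a linear subspace of dimension `m ≥ 2` whose
elements are enumerated as `e 0, …, e (2^m - 1)` in strictly increasing order of
integer value, then `e 0 = 0` and for every `i < m` and every `j` with
`2^i ≤ j ≤ 2^(i+1) - 1` one has `e j = e (2^i) + e (j - 2^i)`. -/
theorem stmt0 {k m : ℕ}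
    (E : Submodule (ZMod 2) (Fin k → ZMod 2))
    (e : Fin (2 ^ m) → (Fin k → ZMod 2))
    (hrange : ∀ v : Fin k → ZMod 2, v ∈ E ↔ ∃ i, e i = v)
    (hmono : StrictMono fun i => intVal (e i)) :
    e ⟨0, by positivity⟩ = 0 ∧
      ∀ i : ℕ, i < m → ∀ j : ℕ, 2 ^ i ≤ j → j ≤ 2 ^ (i + 1) - 1 →
        ∀ (hj : j < 2 ^ m) (h1 : 2 ^ i < 2 ^ m) (h2 : j - 2 ^ i < 2 ^ m),
          e ⟨j, hj⟩ = e ⟨2 ^ i, h1⟩ + e ⟨j - 2 ^ i, h2⟩ := by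
  set f : ℕ → Fin k → ZMod 2 := fun n => if h : n < 2 ^ m then e ⟨n, h⟩ else 0
  have hf : ∀ n (h : n < 2 ^ m), e ⟨n, h⟩ = f n := fun n h => (dif_pos h : f n = e ⟨n, h⟩).symm
  have hfmono : StrictMonoOn (fun n => intVal (f n)) (Set.Iio (2 ^ m)) :=
    fun a ha b hb hab => by simpa only [← hf a ha, ← hf b hb] using hmono (Fin.mk_lt_mk.2 hab)
  have hfadd : AddClosedUpTo f (2 ^ m) := fun r hr s hs => by
    obtain ⟨t, ht⟩ := (hrange _).1 (E.add_mem ((hrange _).2 ⟨_, rfl⟩) ((hrange _).2 ⟨_, rfl⟩))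
    exact ⟨t, t.isLt, by rw [← hf t t.isLt, ← hf r hr, ← hf s hs, ht]⟩
  constructor
  · rw [hf]
    exact enum_zero_eq_zero hfmono hfadd (by positivity)
  intro i hi j hij hj hjm h1 h2
  obtain ⟨r, rfl⟩ := Nat.exists_eq_add_of_le hij
  have hpow : 2 * 2 ^ i ≤ 2 ^ m := by
    rw [← pow_succ']
    exact Nat.pow_le_pow_right two_pos hi
  have hr : r < 2 ^ i := by
    have := Nat.one_le_two_pow (n := i)
    rw [pow_succ] at hj
    omega
  rw [hf, hf, hf, Nat.add_sub_cancel_left]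
  exact (addClosedUpTo_two_pow hfmono hfadd i h1.le).enum_add_eq_add hfmono hfadd hpow r hr
end

section
/- Let k and s be nonnegative integers with k − s even and positive (so k + s is even). Let ω₀, …, ω_{2^{k−s}−1} be pairwise distinct elements of 𝔽₂^k, and let g : {0,…,2^{k−s}−1} → 𝔽₂. Then there exists a Boolean function f on 𝔽₂^k whose Walsh–Hadamard transform satisfies W_f(ω_i) = 2^{(k+s)/2}·(−1)^{g(i)} for every i, and W_f(u) = 0 for every u ∈ 𝔽₂^k outside {ω₀,…,ω_{2^{k−s}−1}}, if and only if for every u ∈ 𝔽₂^k one has ∑_{i=0}^{2^{k−s}−1} (−1)^{g(i) ⊕ ω_i·u} ∈ {2^{(k−s)/2}, −2^{(k−s)/2}}. Such a function f is s-plateaued with Walsh support {ω₀,…,ω_{2^{k−s}−1}}. -/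
open Finset

def dotp {ι : Type*} [Fintype ι] (a b : ι → ZMod 2) : ZMod 2 := ∑ i, a i * b i

def WHT {ι : Type*} [Fintype ι] [DecidableEq ι]
    (f : (ι → ZMod 2) → ZMod 2) (ω : ι → ZMod 2) : ℤ :=
  ∑ x : ι → ZMod 2, (-1 : ℤ) ^ ((f x + dotp ω x).val)

def IsBent {ι : Type*} [Fintype ι] [DecidableEq ι] (f : (ι → ZMod 2) → ZMod 2) : Prop :=
  ∀ ω, |WHT f ω| = 2 ^ (Fintype.card ι / 2)

def IsDualBent {ι : Type*} [Fintype ι] [DecidableEq ι] (f g : (ι → ZMod 2) → ZMod 2) : Prop :=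
  ∀ ω, WHT f ω = 2 ^ (Fintype.card ι / 2) * (-1 : ℤ) ^ ((g ω).val)

def IsPlateaued {ι : Type*} [Fintype ι] [DecidableEq ι] (s : ℕ) (f : (ι → ZMod 2) → ZMod 2) : Prop :=
  ∀ ω, WHT f ω = 0 ∨ WHT f ω = 2 ^ ((Fintype.card ι + s) / 2) ∨
    WHT f ω = -(2 ^ ((Fintype.card ι + s) / 2))

def WSupport {ι : Type*} [Fintype ι] [DecidableEq ι] (f : (ι → ZMod 2) → ZMod 2) : Set (ι → ZMod 2) :=
  {ω | WHT f ω ≠ 0}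



lemma chi_add (a b : ZMod 2) :
    (-1 : ℤ) ^ ((a + b).val) = (-1 : ℤ) ^ a.val * (-1 : ℤ) ^ b.val := by
  revert a b; decide

lemma chi_cases (a : ZMod 2) : (-1:ℤ)^a.val = 1 ∨ (-1:ℤ)^a.val = -1 := by
  revert a; decide

lemma dotp_comm {ι : Type*} [Fintype ι] (a b : ι → ZMod 2) : dotp a b = dotp b a := by
  simp [dotp, mul_comm]

lemma dotp_add_left {ι : Type*} [Fintype ι] (a b c : ι → ZMod 2) :
    dotp (a + b) c = dotp a c + dotp b c := by
  simp [dotp, add_mul, Finset.sum_add_distrib]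

lemma pi_add_eq_zero_iff {ι : Type*} (a b : ι → ZMod 2) : a + b = 0 ↔ a = b := by
  constructor
  · intro h; funext i
    have := congrFun h i
    have h2 : ∀ x y : ZMod 2, x + y = 0 → x = y := by decide
    exact h2 _ _ this
  · rintro rfl; funext i
    have h2 : ∀ x : ZMod 2, x + x = 0 := by decide
    exact h2 _

lemma orth {k : ℕ} (z : Fin k → ZMod 2) :
    ∑ x : Fin k → ZMod 2, (-1:ℤ)^((dotp z x).val) = if z = 0 then 2^k else 0 := by
  split_ifs with h
  · subst h
    have h0 : ∀ x : Fin k → ZMod 2, dotp 0 x = 0 := fun x => by simp [dotp]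
    simp only [h0]
    simp [Fintype.card_fun]
  · obtain ⟨j, hj⟩ : ∃ j, z j ≠ 0 := by
      by_contra hc; push_neg at hc; exact h (funext hc)
    set v : Fin k → ZMod 2 := Pi.single j 1 with hv
    have hdv : dotp z v = 1 := by
      have h1 : z j = 1 := by revert hj; generalize z j = a; revert a; decide
      have : dotp z v = z j := by simp [dotp, hv, Pi.single_apply]
      rw [this, h1]
    set S := ∑ x : Fin k → ZMod 2, (-1:ℤ)^((dotp z x).val) with hS
    have key : S = -S := by
      calc S = ∑ x : Fin k → ZMod 2, (-1:ℤ)^((dotp z (x + v)).val) :=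
              (Equiv.sum_comp (Equiv.addRight v) (fun x => (-1:ℤ)^((dotp z x).val))).symm
        _ = -S := by
            have : ∀ x : Fin k → ZMod 2, dotp z (x + v) = dotp z x + 1 := by
              intro x
              rw [dotp_comm, dotp_add_left, dotp_comm x z, dotp_comm v z, hdv]
            simp only [this, chi_add, ZMod.val_one, pow_one, mul_neg_one]
            rw [← Finset.sum_neg_distrib]
    linarith

lemma inversion {k : ℕ} (f : (Fin k → ZMod 2) → ZMod 2) (x : Fin k → ZMod 2) :
    ∑ w : Fin k → ZMod 2, WHT f w * (-1:ℤ)^((dotp w x).val)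
      = 2^k * (-1:ℤ)^((f x).val) := by
  have step : ∀ w : Fin k → ZMod 2,
      WHT f w * (-1:ℤ)^((dotp w x).val)
      = ∑ y : Fin k → ZMod 2, (-1:ℤ)^((f y).val) * (-1:ℤ)^((dotp w (y + x)).val) := by
    intro w
    rw [WHT, Finset.sum_mul]
    refine Finset.sum_congr rfl fun y _ => ?_
    have : dotp w (y + x) = dotp w y + dotp w x := by
      rw [dotp_comm, dotp_add_left, dotp_comm y w, dotp_comm x w]
    rw [this, chi_add, chi_add]
    ring
  simp only [step]
  rw [Finset.sum_comm]
  have inner : ∀ y : Fin k → ZMod 2,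
      ∑ w : Fin k → ZMod 2, (-1:ℤ)^((f y).val) * (-1:ℤ)^((dotp w (y + x)).val)
      = (-1:ℤ)^((f y).val) * (if y = x then 2^k else 0) := by
    intro y
    rw [← Finset.mul_sum]
    congr 1
    have : ∀ w : Fin k → ZMod 2, dotp w (y + x) = dotp (y + x) w := fun w => dotp_comm _ _
    simp only [this]
    rw [orth]
    exact if_congr (pi_add_eq_zero_iff y x) rfl rfl
  simp only [inner]
  simp [mul_comm]


/-- existence of a Boolean function on `𝔽₂^k` with prescribed plateaued
Walsh spectrum (support `{ω i}`, signs `(-1)^(g i)`, amplitude `2^((k+s)/2)`) iff the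
sign pattern satisfies the `±2^((k-s)/2)` sum condition at every point; moreover any
such `f` is `s`-plateaued with Walsh support `{ω 0, …, ω (2^(k-s) - 1)}`. -/
theorem stmt1 {k s : ℕ} (hks : s < k) (heven : Even (k - s))
    (ω : Fin (2 ^ (k - s)) → (Fin k → ZMod 2)) (hinj : Function.Injective ω)
    (g : Fin (2 ^ (k - s)) → ZMod 2) :
    ((∃ f : (Fin k → ZMod 2) → ZMod 2,
        (∀ i, WHT f (ω i) = 2 ^ ((k + s) / 2) * (-1 : ℤ) ^ (g i).val) ∧
        (∀ u : Fin k → ZMod 2, (∀ i, u ≠ ω i) → WHT f u = 0)) ↔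
      (∀ u : Fin k → ZMod 2,
        (∑ i, (-1 : ℤ) ^ ((g i + dotp (ω i) u).val)) = 2 ^ ((k - s) / 2) ∨
        (∑ i, (-1 : ℤ) ^ ((g i + dotp (ω i) u).val)) = -(2 ^ ((k - s) / 2)))) ∧
    (∀ f : (Fin k → ZMod 2) → ZMod 2,
      (∀ i, WHT f (ω i) = 2 ^ ((k + s) / 2) * (-1 : ℤ) ^ (g i).val) →
      (∀ u : Fin k → ZMod 2, (∀ i, u ≠ ω i) → WHT f u = 0) →
      IsPlateaued s f ∧ WSupport f = Set.range ω) := by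
  obtain ⟨t, ht⟩ := heven
  have hkeq : k = s + t + t := by omega
  have hks2 : (k + s) / 2 = s + t := by omega
  have hkm2 : (k - s) / 2 = t := by omega
  set S : (Fin k → ZMod 2) → ℤ :=
    fun u => ∑ i, (-1 : ℤ) ^ ((g i + dotp (ω i) u).val) with hSdef
  have h2t : (2:ℤ)^t ≠ 0 := pow_ne_zero t two_ne_zero
  have hpowk : (2:ℤ)^k = 2^t * 2^(s+t) := by rw [hkeq]; ring
  -- key computation: if 2^t * χ(f x) = S x for all x, then WHT is as prescribed
  have keycomp : ∀ f : (Fin k → ZMod 2) → ZMod 2,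
      (∀ x, 2^t * (-1:ℤ)^((f x).val) = S x) →
      ∀ u, 2^t * WHT f u = ∑ i, (-1:ℤ)^((g i).val) * (if ω i = u then (2:ℤ)^k else 0) := by
    intro f hchi u
    rw [WHT, Finset.mul_sum]
    have e1 : ∀ x : Fin k → ZMod 2,
        (2:ℤ)^t * (-1:ℤ)^((f x + dotp u x).val)
        = ∑ i, (-1:ℤ)^((g i).val) * (-1:ℤ)^((dotp (ω i + u) x).val) := by
      intro x
      rw [chi_add, ← mul_assoc, hchi x, hSdef]
      rw [Finset.sum_mul]
      refine Finset.sum_congr rfl fun i _ => ?_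
      rw [chi_add, dotp_add_left, chi_add]
      ring
    simp only [e1]
    rw [Finset.sum_comm]
    refine Finset.sum_congr rfl fun i _ => ?_
    rw [← Finset.mul_sum, orth]
    exact congrArg _ (if_congr (pi_add_eq_zero_iff (ω i) u) rfl rfl)
  constructor
  · constructor
    · -- forward: existence implies condition
      rintro ⟨f, hf1, hf2⟩ u
      have hinv := inversion f u
      have hrestrict : ∑ w : Fin k → ZMod 2, WHT f w * (-1:ℤ)^((dotp w u).val)
          = ∑ i, WHT f (ω i) * (-1:ℤ)^((dotp (ω i) u).val) := by
        have himage : ∑ w ∈ Finset.univ.image ω, (WHT f w * (-1:ℤ)^((dotp w u).val))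
            = ∑ i, WHT f (ω i) * (-1:ℤ)^((dotp (ω i) u).val) :=
          Finset.sum_image (fun a _ b _ h => hinj h)
        rw [← himage]
        refine (Finset.sum_subset (Finset.subset_univ _) fun w _ hw => ?_).symm
        have : ∀ i, w ≠ ω i := by
          intro i hi
          exact hw (Finset.mem_image.2 ⟨i, Finset.mem_univ i, hi.symm⟩)
        rw [hf2 w this, zero_mul]
      have hval : ∑ i, WHT f (ω i) * (-1:ℤ)^((dotp (ω i) u).val)
          = 2^(s+t) * S u := by
        rw [hSdef, Finset.mul_sum]
        refine Finset.sum_congr rfl fun i _ => ?_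
        rw [hf1 i, hks2, chi_add]
        ring
      rw [hrestrict, hval, hpowk] at hinv
      have hS : S u = 2^t * (-1:ℤ)^((f u).val) := by
        have h2st : (2:ℤ)^(s+t) ≠ 0 := pow_ne_zero _ two_ne_zero
        have : (2:ℤ)^(s+t) * S u = 2^(s+t) * (2^t * (-1:ℤ)^((f u).val)) := by
          linarith [hinv]
        exact mul_left_cancel₀ h2st this
      rw [hkm2]
      show S u = 2^t ∨ S u = -(2^t)
      rcases chi_cases (f u) with h | h <;> rw [h] at hS
      · left; rw [hS]; ring
      · right; rw [hS]; ring
    · -- backward: condition implies existence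
      intro hcond
      classical
      refine ⟨fun x => if S x = 2^t then 0 else 1, ?_, ?_⟩ <;>
      · have hchi : ∀ x, 2^t * (-1:ℤ)^(((fun x => if S x = 2^t then (0:ZMod 2) else 1) x).val)
            = S x := by
          intro x
          have hSx : S x = ∑ i, (-1:ℤ)^((g i + dotp (ω i) x).val) := rfl
          show 2^t * (-1:ℤ)^((if S x = 2^t then (0:ZMod 2) else 1).val) = S x
          by_cases h : S x = 2^t
          · rw [if_pos h, h]; simp
          · have hcx := hcond x
            rw [hkm2] at hcx
            rcases hcx with h1 | h1
            · exact absurd (hSx.trans h1) h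
            · have hSx2 : S x = -2^t := hSx.trans h1
              rw [if_neg h, hSx2, ZMod.val_one, pow_one]; ring
        have hk := keycomp _ hchi
        first
        | · intro i
            have := hk (ω i)
            have heq : ∑ j, (-1:ℤ)^((g j).val) * (if ω j = ω i then (2:ℤ)^k else 0)
                = (-1:ℤ)^((g i).val) * 2^k := by
              rw [Finset.sum_eq_single i]
              · simp
              · intro j _ hji
                rw [if_neg (fun h => hji (hinj h)), mul_zero]
              · intro h; exact absurd (Finset.mem_univ i) h
            rw [heq, hpowk] at this
            apply mul_left_cancel₀ h2t
            rw [this, hks2]; ring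
        | · intro u hu
            have := hk u
            have heq : ∑ j, (-1:ℤ)^((g j).val) * (if ω j = u then (2:ℤ)^k else 0) = 0 := by
              refine Finset.sum_eq_zero fun j _ => ?_
              rw [if_neg (fun h => hu j h.symm), mul_zero]
            rw [heq] at this
            exact (mul_eq_zero.1 this).resolve_left h2t
  · -- part 2: plateaued and support
    intro f hf1 hf2
    have hcard : (Fintype.card (Fin k) + s) / 2 = (k + s) / 2 := by
      rw [Fintype.card_fin]
    constructor
    · intro w
      by_cases hw : ∃ i, w = ω i
      · obtain ⟨i, rfl⟩ := hw
        rw [hf1 i, hcard]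
        rcases chi_cases (g i) with h | h <;> rw [h]
        · right; left; ring
        · right; right; ring
      · push_neg at hw
        exact Or.inl (hf2 w hw)
    · ext u
      simp only [WSupport, Set.mem_setOf_eq, Set.mem_range]
      constructor
      · intro hu
        by_contra hc
        push_neg at hc
        exact hu (hf2 u (fun i h => hc i h.symm))
      · rintro ⟨i, rfl⟩
        rw [hf1 i]
        rcases chi_cases (g i) with h | h <;> rw [h] <;> simp
end

section
/- Let t, m, r be positive integers and k = t + m. Let f be a Boolean function on 𝔽₂^k and let h₁,…,h_t be Boolean functions on 𝔽₂^r. Define 𝔣 : 𝔽₂^r × 𝔽₂^m → 𝔽₂ by 𝔣(x,y) = f(h₁(x),…,h_t(x), y₁,…,y_m). Then for every (u,v) ∈ 𝔽₂^r × 𝔽₂^m one has W_𝔣(u,v) = 2^{−t} ∑_{δ∈𝔽₂^t} W_f(δ,v) · W_{δ·(h₁,…,h_t)}(u), where (δ,v) denotes the concatenated vector in 𝔽₂^k. -/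
open Finset

lemma e_add (a b : ZMod 2) : ((-1:ℤ)^((a+b).val)) = ((-1:ℤ)^(a.val)) * ((-1:ℤ)^(b.val)) := by
  revert a b; decide

lemma dotp_add_right {ι : Type*} [Fintype ι] (a b c : ι → ZMod 2) :
    dotp a (b + c) = dotp a b + dotp a c := by
  simp [dotp, mul_add, Finset.sum_add_distrib]

lemma dotp_single {ι : Type*} [Fintype ι] [DecidableEq ι] (i : ι) (w : ι → ZMod 2) :
    dotp (Pi.single i 1) w = w i := by
  unfold dotp
  rw [Finset.sum_eq_single i]
  · simp
  · intro j _ hj; simp [Pi.single_apply, hj]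
  · simp

lemma ortho {t : ℕ} (w : Fin t → ZMod 2) :
    ∑ δ : Fin t → ZMod 2, (-1:ℤ)^((dotp δ w).val) = if w = 0 then 2^t else 0 := by
  split_ifs with hw
  · subst hw
    have : ∀ δ : Fin t → ZMod 2, dotp δ 0 = 0 := by intro δ; simp [dotp]
    simp only [this]
    simp [Finset.card_univ]
  · obtain ⟨i, hi⟩ := Function.ne_iff.mp hw
    have hi' : w i ≠ 0 := by simpa using hi
    have hall : ∀ c : ZMod 2, c ≠ 0 → c = 1 := by decide
    have hwi : w i = 1 := hall _ hi'
    set S : ℤ := ∑ δ : Fin t → ZMod 2, (-1:ℤ)^((dotp δ w).val) with hS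
    have hflip : S = -S := by
      rw [hS]
      conv_lhs => rw [← Equiv.sum_comp (Equiv.addRight (Pi.single i 1))
        (fun δ => (-1:ℤ)^((dotp δ w).val))]
      rw [← Finset.sum_neg_distrib]
      simp only [Equiv.coe_addRight]
      refine Finset.sum_congr rfl fun δ _ => ?_
      rw [dotp_add_left, dotp_single, hwi]
      generalize dotp δ w = c
      revert c; decide
    linarith

lemma dotp_append {t m : ℕ} (δ a : Fin t → ZMod 2) (v b : Fin m → ZMod 2) :
    dotp (Fin.append δ v) (Fin.append a b) = dotp δ a + dotp v b := by
  unfold dotp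
  rw [Fin.sum_univ_add]
  simp [Fin.append_left, Fin.append_right]

lemma dotp_elim {r m : ℕ} (u x : Fin r → ZMod 2) (v y : Fin m → ZMod 2) :
    dotp (Sum.elim u v) (Sum.elim x y) = dotp u x + dotp v y := by
  unfold dotp
  rw [Fintype.sum_sum_type]
  simp

lemma sum_append {t m : ℕ} (g : (Fin (t+m) → ZMod 2) → ℤ) :
    ∑ z : Fin (t+m) → ZMod 2, g z
      = ∑ a : Fin t → ZMod 2, ∑ b : Fin m → ZMod 2, g (Fin.append a b) := by
  rw [← Equiv.sum_comp (Fin.appendEquiv t m) g, Fintype.sum_prod_type]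
  rfl

lemma sum_elim' {r m : ℕ} (g : ((Fin r ⊕ Fin m) → ZMod 2) → ℤ) :
    ∑ z : (Fin r ⊕ Fin m) → ZMod 2, g z
      = ∑ a : Fin r → ZMod 2, ∑ b : Fin m → ZMod 2, g (Sum.elim a b) := by
  rw [← Equiv.sum_comp (Equiv.sumArrowEquivProdArrow (Fin r) (Fin m) (ZMod 2)).symm g,
    Fintype.sum_prod_type]
  refine Finset.sum_congr rfl fun a _ => Finset.sum_congr rfl fun b _ => ?_
  congr 1

lemma pi_add_eq_zero {ι : Type*} [Fintype ι] (a c : ι → ZMod 2) :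
    a + c = 0 ↔ a = c := by
  constructor
  · intro hac
    ext i
    have := congrFun hac i
    simp only [Pi.add_apply, Pi.zero_apply] at this
    revert this
    generalize a i = p; generalize c i = q
    revert p q; decide
  · rintro rfl
    ext i
    simp only [Pi.add_apply, Pi.zero_apply]
    generalize a i = p; revert p; decide

def Esgn (c : ZMod 2) : ℤ := (-1:ℤ)^(c.val)

lemma Esgn_add (a b : ZMod 2) : Esgn (a + b) = Esgn a * Esgn b := e_add a b

lemma WHT_eq {ι : Type*} [Fintype ι] [DecidableEq ι]
    (f : (ι → ZMod 2) → ZMod 2) (ω : ι → ZMod 2) :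
    WHT f ω = ∑ x : ι → ZMod 2, Esgn (f x + dotp ω x) := rfl

lemma ortho' {t : ℕ} (w : Fin t → ZMod 2) :
    ∑ δ : Fin t → ZMod 2, Esgn (dotp δ w) = if w = 0 then 2^t else 0 := ortho w

/-- the Walsh transform of `𝔣(x,y) = f(h₁(x),…,h_t(x),y)` satisfies
`2^t · W_𝔣(u,v) = ∑_{δ∈𝔽₂^t} W_f(δ,v) · W_{δ·(h₁,…,h_t)}(u)`. -/
theorem stmt3 {t m r : ℕ} (ht : 0 < t) (hm : 0 < m) (hr : 0 < r)
    (f : (Fin (t + m) → ZMod 2) → ZMod 2)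
    (h : Fin t → (Fin r → ZMod 2) → ZMod 2)
    (F : ((Fin r ⊕ Fin m) → ZMod 2) → ZMod 2)
    (hF : ∀ x, F x = f (Fin.append (fun i => h i (x ∘ Sum.inl)) (x ∘ Sum.inr)))
    (u : Fin r → ZMod 2) (v : Fin m → ZMod 2) :
    (2 ^ t : ℤ) * WHT F (Sum.elim u v) =
      ∑ δ : Fin t → ZMod 2,
        WHT f (Fin.append δ v) * WHT (fun x => dotp δ (fun i => h i x)) u := by
  calc (2 ^ t : ℤ) * WHT F (Sum.elim u v)
      = ∑ x : Fin r → ZMod 2, ∑ b : Fin m → ZMod 2,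
          (2^t : ℤ) * (Esgn (f (Fin.append (fun i => h i x) b)) * Esgn (dotp u x) * Esgn (dotp v b)) := by
        rw [WHT_eq, sum_elim' (fun z => Esgn (F z + dotp (Sum.elim u v) z)), Finset.mul_sum]
        refine Finset.sum_congr rfl fun x _ => ?_
        rw [Finset.mul_sum]
        refine Finset.sum_congr rfl fun b _ => ?_
        rw [hF, dotp_elim]
        have h1 : (Sum.elim x b ∘ Sum.inl) = x := rfl
        have h2 : (Sum.elim x b ∘ Sum.inr) = b := rfl
        rw [h1, h2, Esgn_add, Esgn_add]
        ring
    _ = ∑ x : Fin r → ZMod 2, ∑ b : Fin m → ZMod 2,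
          ∑ a : Fin t → ZMod 2,
            (if a = (fun i => h i x) then (2^t : ℤ) else 0) *
              (Esgn (f (Fin.append a b)) * Esgn (dotp u x) * Esgn (dotp v b)) := by
        refine Finset.sum_congr rfl fun x _ => Finset.sum_congr rfl fun b _ => ?_
        symm
        simp only [ite_mul, zero_mul, Finset.sum_ite_eq', Finset.mem_univ, if_true]
    _ = ∑ δ : Fin t → ZMod 2,
        WHT f (Fin.append δ v) * WHT (fun x => dotp δ (fun i => h i x)) u := by
        symm
        calc ∑ δ : Fin t → ZMod 2,
            WHT f (Fin.append δ v) * WHT (fun x => dotp δ (fun i => h i x)) u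
            = ∑ δ : Fin t → ZMod 2, ∑ a : Fin t → ZMod 2, ∑ b : Fin m → ZMod 2,
                ∑ x : Fin r → ZMod 2,
                (Esgn (f (Fin.append a b)) * Esgn (dotp u x) * Esgn (dotp v b)) *
                  (Esgn (dotp δ a) * Esgn (dotp δ (fun i => h i x))) := by
              refine Finset.sum_congr rfl fun δ _ => ?_
              rw [WHT_eq, WHT_eq,
                sum_append (fun z => Esgn (f z + dotp (Fin.append δ v) z)), Finset.sum_mul]
              refine Finset.sum_congr rfl fun a _ => ?_
              rw [Finset.sum_mul]
              refine Finset.sum_congr rfl fun b _ => ?_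
              rw [Finset.mul_sum]
              refine Finset.sum_congr rfl fun x _ => ?_
              rw [dotp_append]
              simp only [Esgn_add]
              ring
          _ = ∑ a : Fin t → ZMod 2, ∑ b : Fin m → ZMod 2, ∑ x : Fin r → ZMod 2,
                ∑ δ : Fin t → ZMod 2,
                (Esgn (f (Fin.append a b)) * Esgn (dotp u x) * Esgn (dotp v b)) *
                  (Esgn (dotp δ a) * Esgn (dotp δ (fun i => h i x))) := by
              rw [Finset.sum_comm]
              refine Finset.sum_congr rfl fun a _ => ?_
              rw [Finset.sum_comm]
              refine Finset.sum_congr rfl fun b _ => ?_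
              rw [Finset.sum_comm]
          _ = ∑ a : Fin t → ZMod 2, ∑ b : Fin m → ZMod 2, ∑ x : Fin r → ZMod 2,
                (Esgn (f (Fin.append a b)) * Esgn (dotp u x) * Esgn (dotp v b)) *
                  (if a = (fun i => h i x) then (2^t : ℤ) else 0) := by
              refine Finset.sum_congr rfl fun a _ => Finset.sum_congr rfl fun b _ =>
                Finset.sum_congr rfl fun x _ => ?_
              rw [← Finset.mul_sum]
              congr 1
              have hc : ∀ δ : Fin t → ZMod 2,
                  Esgn (dotp δ a) * Esgn (dotp δ (fun i => h i x))
                    = Esgn (dotp δ (a + fun i => h i x)) := fun δ => by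
                rw [dotp_add_right, Esgn_add]
              rw [Finset.sum_congr rfl (fun δ _ => hc δ), ortho']
              simp only [pi_add_eq_zero]
          _ = ∑ x : Fin r → ZMod 2, ∑ b : Fin m → ZMod 2,
                ∑ a : Fin t → ZMod 2,
                (if a = (fun i => h i x) then (2^t : ℤ) else 0) *
                  (Esgn (f (Fin.append a b)) * Esgn (dotp u x) * Esgn (dotp v b)) := by
              have mid : (∑ b : Fin m → ZMod 2, ∑ a : Fin t → ZMod 2,
                    ∑ x : Fin r → ZMod 2,
                    (Esgn (f (Fin.append a b)) * Esgn (dotp u x) * Esgn (dotp v b)) *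
                      (if a = (fun i => h i x) then (2^t:ℤ) else 0))
                  = ∑ b : Fin m → ZMod 2, ∑ x : Fin r → ZMod 2,
                    ∑ a : Fin t → ZMod 2,
                    (Esgn (f (Fin.append a b)) * Esgn (dotp u x) * Esgn (dotp v b)) *
                      (if a = (fun i => h i x) then (2^t:ℤ) else 0) :=
                Finset.sum_congr rfl fun b _ => Finset.sum_comm
              rw [Finset.sum_comm, mid, Finset.sum_comm]
              exact Finset.sum_congr rfl fun x _ => Finset.sum_congr rfl fun b _ =>
                Finset.sum_congr rfl fun a _ => mul_comm _ _
          _ = _ := by rw [Finset.sum_comm]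
end

section
/- Let r be even and let a, b, c be bent functions on 𝔽₂^r such that a ⊕ b ⊕ c is also bent. Then the function 𝔣 : 𝔽₂^r × 𝔽₂^4 → 𝔽₂ defined by 𝔣(x, y₁, y₂, y₃, y₄) = b(x)(y₁ ⊕ y₂) ⊕ a(x)(1 ⊕ y₁ ⊕ y₃) ⊕ (c(x) ⊕ y₁)(y₂ ⊕ y₃) ⊕ (y₁ ⊕ y₂)y₄ is a bent function on 𝔽₂^{r+4}. -/
open Finset

lemma sign_add (p q : ZMod 2) : ((-1:ℤ))^((p+q).val) = (-1)^p.val * (-1)^q.val := by revert p q; decide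

lemma sum_zmod2 {M : Type*} [AddCommMonoid M] (F : ZMod 2 → M) : ∑ z, F z = F 0 + F 1 := by
  rw [show (univ : Finset (ZMod 2)) = {0, 1} from by decide]
  rw [Finset.sum_insert (by decide), Finset.sum_singleton]

lemma dotp4 (v y : Fin 4 → ZMod 2) : dotp v y = v 0 * y 0 + v 1 * y 1 + v 2 * y 2 + v 3 * y 3 := by
  simp [dotp, Fin.sum_univ_four]

lemma dotp_sum_elim {r : ℕ} (ω : (Fin r ⊕ Fin 4) → ZMod 2) (x : Fin r → ZMod 2) (y : Fin 4 → ZMod 2) :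
    dotp ω (Sum.elim x y) = dotp (ω ∘ Sum.inl) x + dotp (ω ∘ Sum.inr) y := by
  simp [dotp, Fintype.sum_sum_type]

lemma expand16 (F : (Fin 4 → ZMod 2) → ℤ) :
    ∑ y, F y = F ![0,0,0,0] + F ![0,0,0,1] + F ![0,0,1,0] + F ![0,0,1,1] +
      F ![0,1,0,0] + F ![0,1,0,1] + F ![0,1,1,0] + F ![0,1,1,1] +
      F ![1,0,0,0] + F ![1,0,0,1] + F ![1,0,1,0] + F ![1,0,1,1] +
      F ![1,1,0,0] + F ![1,1,0,1] + F ![1,1,1,0] + F ![1,1,1,1] := by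
  have hb : Function.Bijective (fun p : ZMod 2 × ZMod 2 × ZMod 2 × ZMod 2 =>
      (![p.1, p.2.1, p.2.2.1, p.2.2.2] : Fin 4 → ZMod 2)) := by decide
  rw [← Fintype.sum_bijective _ hb _ F (fun _ => rfl)]
  simp only [Fintype.sum_prod_type, sum_zmod2]
  ring

lemma Sval' {ι : Type*} [Fintype ι] [DecidableEq ι] (F g : (ι → ZMod 2) → ZMod 2)
    (K δ : ZMod 2) (ωl : ι → ZMod 2) (hg : ∀ x, F x + K = g x + δ) :
    (∑ x : ι → ZMod 2, (-1:ℤ)^((F x + (dotp ωl x + K)).val)) = (-1)^δ.val * WHT g ωl := by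
  rw [WHT, Finset.mul_sum]
  refine Finset.sum_congr rfl fun x _ => ?_
  have h1 : F x + (dotp ωl x + K) = δ + (g x + dotp ωl x) := by linear_combination hg x
  rw [h1, sign_add]

lemma WHT_split {r : ℕ} (f : ((Fin r ⊕ Fin 4) → ZMod 2) → ZMod 2) (ω : (Fin r ⊕ Fin 4) → ZMod 2) :
    WHT f ω = ∑ y : Fin 4 → ZMod 2, ∑ x : Fin r → ZMod 2,
      (-1:ℤ)^((f (Sum.elim x y) + (dotp (ω ∘ Sum.inl) x + dotp (ω ∘ Sum.inr) y)).val) := by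
  rw [WHT]
  rw [← Equiv.sum_comp (Equiv.sumArrowEquivProdArrow (Fin r) (Fin 4) (ZMod 2)).symm
      (fun z => (-1:ℤ)^((f z + dotp ω z).val))]
  rw [Fintype.sum_prod_type, Finset.sum_comm]
  refine Finset.sum_congr rfl fun y _ => Finset.sum_congr rfl fun x _ => ?_
  have h1 : (Equiv.sumArrowEquivProdArrow (Fin r) (Fin 4) (ZMod 2)).symm (x, y) = Sum.elim x y := by
    funext i; cases i <;> rfl
  rw [h1, dotp_sum_elim]

lemma tpm (z : ZMod 2) : (-1:ℤ)^z.val = 1 ∨ (-1:ℤ)^z.val = -1 := by revert z; decide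


set_option maxHeartbeats 4000000

/-- Generalized Rothaus A: if `a`, `b`, `c` and `a ⊕ b ⊕ c` are bent
on `𝔽₂^r` (`r` even), then
`𝔣(x,y₁,…,y₄) = b(x)(y₁⊕y₂) ⊕ a(x)(1⊕y₁⊕y₃) ⊕ (c(x)⊕y₁)(y₂⊕y₃) ⊕ (y₁⊕y₂)y₄`
is bent on `𝔽₂^(r+4)`. -/
theorem stmt6 {r : ℕ} (hre : Even r)
    (a b c : (Fin r → ZMod 2) → ZMod 2)
    (ha : IsBent a) (hb : IsBent b) (hc : IsBent c)
    (habc : IsBent (fun x => a x + b x + c x)) :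
    IsBent (fun x : (Fin r ⊕ Fin 4) → ZMod 2 =>
      b (x ∘ Sum.inl) * (x (Sum.inr 0) + x (Sum.inr 1)) +
      a (x ∘ Sum.inl) * (1 + x (Sum.inr 0) + x (Sum.inr 2)) +
      (c (x ∘ Sum.inl) + x (Sum.inr 0)) * (x (Sum.inr 1) + x (Sum.inr 2)) +
      (x (Sum.inr 0) + x (Sum.inr 1)) * x (Sum.inr 3)) := by
  obtain ⟨k, hk⟩ := hre
  intro ω
  rw [WHT_split, expand16]
  simp only [Sum.elim_comp_inl, Sum.elim_inr, Matrix.cons_val_zero, Matrix.cons_val_one,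
    Matrix.head_cons, Matrix.cons_val_two, Matrix.tail_cons, Matrix.cons_val_three]
  have E0 : (∑ x : Fin r → ZMod 2, (-1:ℤ)^((b x * (0 + 0) + a x * (1 + 0 + 0) + (c x + 0) * (0 + 0) + (0 + 0) * 0 +
      (dotp (ω ∘ Sum.inl) x + dotp (ω ∘ Sum.inr) ![0, 0, 0, 0])).val))
      = (-1:ℤ)^(((0 : ZMod 2) : ZMod 2).val) * WHT a (ω ∘ Sum.inl) :=
    Sval' _ _ _ _ _ (by
      intro x
      rw [dotp4]
      simp only [Matrix.cons_val_zero, Matrix.cons_val_one, Matrix.head_cons,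
        Matrix.cons_val_two, Matrix.tail_cons, Matrix.cons_val_three]
      generalize a x = p
      generalize b x = q
      generalize c x = s
      generalize (ω ∘ Sum.inr) 0 = w0
      generalize (ω ∘ Sum.inr) 1 = w1
      generalize (ω ∘ Sum.inr) 2 = w2
      generalize (ω ∘ Sum.inr) 3 = w3
      revert p q s w0 w1 w2 w3
      decide)
  have E1 : (∑ x : Fin r → ZMod 2, (-1:ℤ)^((b x * (0 + 0) + a x * (1 + 0 + 0) + (c x + 0) * (0 + 0) + (0 + 0) * 1 +
      (dotp (ω ∘ Sum.inl) x + dotp (ω ∘ Sum.inr) ![0, 0, 0, 1])).val))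
      = (-1:ℤ)^(((ω ∘ Sum.inr) 3 : ZMod 2).val) * WHT a (ω ∘ Sum.inl) :=
    Sval' _ _ _ _ _ (by
      intro x
      rw [dotp4]
      simp only [Matrix.cons_val_zero, Matrix.cons_val_one, Matrix.head_cons,
        Matrix.cons_val_two, Matrix.tail_cons, Matrix.cons_val_three]
      generalize a x = p
      generalize b x = q
      generalize c x = s
      generalize (ω ∘ Sum.inr) 0 = w0
      generalize (ω ∘ Sum.inr) 1 = w1
      generalize (ω ∘ Sum.inr) 2 = w2
      generalize (ω ∘ Sum.inr) 3 = w3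
      revert p q s w0 w1 w2 w3
      decide)
  have E2 : (∑ x : Fin r → ZMod 2, (-1:ℤ)^((b x * (0 + 0) + a x * (1 + 0 + 1) + (c x + 0) * (0 + 1) + (0 + 0) * 0 +
      (dotp (ω ∘ Sum.inl) x + dotp (ω ∘ Sum.inr) ![0, 0, 1, 0])).val))
      = (-1:ℤ)^(((ω ∘ Sum.inr) 2 : ZMod 2).val) * WHT c (ω ∘ Sum.inl) :=
    Sval' _ _ _ _ _ (by
      intro x
      rw [dotp4]
      simp only [Matrix.cons_val_zero, Matrix.cons_val_one, Matrix.head_cons,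
        Matrix.cons_val_two, Matrix.tail_cons, Matrix.cons_val_three]
      generalize a x = p
      generalize b x = q
      generalize c x = s
      generalize (ω ∘ Sum.inr) 0 = w0
      generalize (ω ∘ Sum.inr) 1 = w1
      generalize (ω ∘ Sum.inr) 2 = w2
      generalize (ω ∘ Sum.inr) 3 = w3
      revert p q s w0 w1 w2 w3
      decide)
  have E3 : (∑ x : Fin r → ZMod 2, (-1:ℤ)^((b x * (0 + 0) + a x * (1 + 0 + 1) + (c x + 0) * (0 + 1) + (0 + 0) * 1 +
      (dotp (ω ∘ Sum.inl) x + dotp (ω ∘ Sum.inr) ![0, 0, 1, 1])).val))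
      = (-1:ℤ)^(((ω ∘ Sum.inr) 2 + (ω ∘ Sum.inr) 3 : ZMod 2).val) * WHT c (ω ∘ Sum.inl) :=
    Sval' _ _ _ _ _ (by
      intro x
      rw [dotp4]
      simp only [Matrix.cons_val_zero, Matrix.cons_val_one, Matrix.head_cons,
        Matrix.cons_val_two, Matrix.tail_cons, Matrix.cons_val_three]
      generalize a x = p
      generalize b x = q
      generalize c x = s
      generalize (ω ∘ Sum.inr) 0 = w0
      generalize (ω ∘ Sum.inr) 1 = w1
      generalize (ω ∘ Sum.inr) 2 = w2
      generalize (ω ∘ Sum.inr) 3 = w3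
      revert p q s w0 w1 w2 w3
      decide)
  have E4 : (∑ x : Fin r → ZMod 2, (-1:ℤ)^((b x * (0 + 1) + a x * (1 + 0 + 0) + (c x + 0) * (1 + 0) + (0 + 1) * 0 +
      (dotp (ω ∘ Sum.inl) x + dotp (ω ∘ Sum.inr) ![0, 1, 0, 0])).val))
      = (-1:ℤ)^(((ω ∘ Sum.inr) 1 : ZMod 2).val) * WHT (fun x => a x + b x + c x) (ω ∘ Sum.inl) :=
    Sval' _ _ _ _ _ (by
      intro x
      rw [dotp4]
      simp only [Matrix.cons_val_zero, Matrix.cons_val_one, Matrix.head_cons,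
        Matrix.cons_val_two, Matrix.tail_cons, Matrix.cons_val_three]
      generalize a x = p
      generalize b x = q
      generalize c x = s
      generalize (ω ∘ Sum.inr) 0 = w0
      generalize (ω ∘ Sum.inr) 1 = w1
      generalize (ω ∘ Sum.inr) 2 = w2
      generalize (ω ∘ Sum.inr) 3 = w3
      revert p q s w0 w1 w2 w3
      decide)
  have E5 : (∑ x : Fin r → ZMod 2, (-1:ℤ)^((b x * (0 + 1) + a x * (1 + 0 + 0) + (c x + 0) * (1 + 0) + (0 + 1) * 1 +
      (dotp (ω ∘ Sum.inl) x + dotp (ω ∘ Sum.inr) ![0, 1, 0, 1])).val))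
      = (-1:ℤ)^((1 + (ω ∘ Sum.inr) 1 + (ω ∘ Sum.inr) 3 : ZMod 2).val) * WHT (fun x => a x + b x + c x) (ω ∘ Sum.inl) :=
    Sval' _ _ _ _ _ (by
      intro x
      rw [dotp4]
      simp only [Matrix.cons_val_zero, Matrix.cons_val_one, Matrix.head_cons,
        Matrix.cons_val_two, Matrix.tail_cons, Matrix.cons_val_three]
      generalize a x = p
      generalize b x = q
      generalize c x = s
      generalize (ω ∘ Sum.inr) 0 = w0
      generalize (ω ∘ Sum.inr) 1 = w1
      generalize (ω ∘ Sum.inr) 2 = w2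
      generalize (ω ∘ Sum.inr) 3 = w3
      revert p q s w0 w1 w2 w3
      decide)
  have E6 : (∑ x : Fin r → ZMod 2, (-1:ℤ)^((b x * (0 + 1) + a x * (1 + 0 + 1) + (c x + 0) * (1 + 1) + (0 + 1) * 0 +
      (dotp (ω ∘ Sum.inl) x + dotp (ω ∘ Sum.inr) ![0, 1, 1, 0])).val))
      = (-1:ℤ)^(((ω ∘ Sum.inr) 1 + (ω ∘ Sum.inr) 2 : ZMod 2).val) * WHT b (ω ∘ Sum.inl) :=
    Sval' _ _ _ _ _ (by
      intro x
      rw [dotp4]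
      simp only [Matrix.cons_val_zero, Matrix.cons_val_one, Matrix.head_cons,
        Matrix.cons_val_two, Matrix.tail_cons, Matrix.cons_val_three]
      generalize a x = p
      generalize b x = q
      generalize c x = s
      generalize (ω ∘ Sum.inr) 0 = w0
      generalize (ω ∘ Sum.inr) 1 = w1
      generalize (ω ∘ Sum.inr) 2 = w2
      generalize (ω ∘ Sum.inr) 3 = w3
      revert p q s w0 w1 w2 w3
      decide)
  have E7 : (∑ x : Fin r → ZMod 2, (-1:ℤ)^((b x * (0 + 1) + a x * (1 + 0 + 1) + (c x + 0) * (1 + 1) + (0 + 1) * 1 +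
      (dotp (ω ∘ Sum.inl) x + dotp (ω ∘ Sum.inr) ![0, 1, 1, 1])).val))
      = (-1:ℤ)^((1 + (ω ∘ Sum.inr) 1 + (ω ∘ Sum.inr) 2 + (ω ∘ Sum.inr) 3 : ZMod 2).val) * WHT b (ω ∘ Sum.inl) :=
    Sval' _ _ _ _ _ (by
      intro x
      rw [dotp4]
      simp only [Matrix.cons_val_zero, Matrix.cons_val_one, Matrix.head_cons,
        Matrix.cons_val_two, Matrix.tail_cons, Matrix.cons_val_three]
      generalize a x = p
      generalize b x = q
      generalize c x = s
      generalize (ω ∘ Sum.inr) 0 = w0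
      generalize (ω ∘ Sum.inr) 1 = w1
      generalize (ω ∘ Sum.inr) 2 = w2
      generalize (ω ∘ Sum.inr) 3 = w3
      revert p q s w0 w1 w2 w3
      decide)
  have E8 : (∑ x : Fin r → ZMod 2, (-1:ℤ)^((b x * (1 + 0) + a x * (1 + 1 + 0) + (c x + 1) * (0 + 0) + (1 + 0) * 0 +
      (dotp (ω ∘ Sum.inl) x + dotp (ω ∘ Sum.inr) ![1, 0, 0, 0])).val))
      = (-1:ℤ)^(((ω ∘ Sum.inr) 0 : ZMod 2).val) * WHT b (ω ∘ Sum.inl) :=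
    Sval' _ _ _ _ _ (by
      intro x
      rw [dotp4]
      simp only [Matrix.cons_val_zero, Matrix.cons_val_one, Matrix.head_cons,
        Matrix.cons_val_two, Matrix.tail_cons, Matrix.cons_val_three]
      generalize a x = p
      generalize b x = q
      generalize c x = s
      generalize (ω ∘ Sum.inr) 0 = w0
      generalize (ω ∘ Sum.inr) 1 = w1
      generalize (ω ∘ Sum.inr) 2 = w2
      generalize (ω ∘ Sum.inr) 3 = w3
      revert p q s w0 w1 w2 w3
      decide)
  have E9 : (∑ x : Fin r → ZMod 2, (-1:ℤ)^((b x * (1 + 0) + a x * (1 + 1 + 0) + (c x + 1) * (0 + 0) + (1 + 0) * 1 +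
      (dotp (ω ∘ Sum.inl) x + dotp (ω ∘ Sum.inr) ![1, 0, 0, 1])).val))
      = (-1:ℤ)^((1 + (ω ∘ Sum.inr) 0 + (ω ∘ Sum.inr) 3 : ZMod 2).val) * WHT b (ω ∘ Sum.inl) :=
    Sval' _ _ _ _ _ (by
      intro x
      rw [dotp4]
      simp only [Matrix.cons_val_zero, Matrix.cons_val_one, Matrix.head_cons,
        Matrix.cons_val_two, Matrix.tail_cons, Matrix.cons_val_three]
      generalize a x = p
      generalize b x = q
      generalize c x = s
      generalize (ω ∘ Sum.inr) 0 = w0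
      generalize (ω ∘ Sum.inr) 1 = w1
      generalize (ω ∘ Sum.inr) 2 = w2
      generalize (ω ∘ Sum.inr) 3 = w3
      revert p q s w0 w1 w2 w3
      decide)
  have E10 : (∑ x : Fin r → ZMod 2, (-1:ℤ)^((b x * (1 + 0) + a x * (1 + 1 + 1) + (c x + 1) * (0 + 1) + (1 + 0) * 0 +
      (dotp (ω ∘ Sum.inl) x + dotp (ω ∘ Sum.inr) ![1, 0, 1, 0])).val))
      = (-1:ℤ)^((1 + (ω ∘ Sum.inr) 0 + (ω ∘ Sum.inr) 2 : ZMod 2).val) * WHT (fun x => a x + b x + c x) (ω ∘ Sum.inl) :=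
    Sval' _ _ _ _ _ (by
      intro x
      rw [dotp4]
      simp only [Matrix.cons_val_zero, Matrix.cons_val_one, Matrix.head_cons,
        Matrix.cons_val_two, Matrix.tail_cons, Matrix.cons_val_three]
      generalize a x = p
      generalize b x = q
      generalize c x = s
      generalize (ω ∘ Sum.inr) 0 = w0
      generalize (ω ∘ Sum.inr) 1 = w1
      generalize (ω ∘ Sum.inr) 2 = w2
      generalize (ω ∘ Sum.inr) 3 = w3
      revert p q s w0 w1 w2 w3
      decide)
  have E11 : (∑ x : Fin r → ZMod 2, (-1:ℤ)^((b x * (1 + 0) + a x * (1 + 1 + 1) + (c x + 1) * (0 + 1) + (1 + 0) * 1 +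
      (dotp (ω ∘ Sum.inl) x + dotp (ω ∘ Sum.inr) ![1, 0, 1, 1])).val))
      = (-1:ℤ)^(((ω ∘ Sum.inr) 0 + (ω ∘ Sum.inr) 2 + (ω ∘ Sum.inr) 3 : ZMod 2).val) * WHT (fun x => a x + b x + c x) (ω ∘ Sum.inl) :=
    Sval' _ _ _ _ _ (by
      intro x
      rw [dotp4]
      simp only [Matrix.cons_val_zero, Matrix.cons_val_one, Matrix.head_cons,
        Matrix.cons_val_two, Matrix.tail_cons, Matrix.cons_val_three]
      generalize a x = p
      generalize b x = q
      generalize c x = s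
      generalize (ω ∘ Sum.inr) 0 = w0
      generalize (ω ∘ Sum.inr) 1 = w1
      generalize (ω ∘ Sum.inr) 2 = w2
      generalize (ω ∘ Sum.inr) 3 = w3
      revert p q s w0 w1 w2 w3
      decide)
  have E12 : (∑ x : Fin r → ZMod 2, (-1:ℤ)^((b x * (1 + 1) + a x * (1 + 1 + 0) + (c x + 1) * (1 + 0) + (1 + 1) * 0 +
      (dotp (ω ∘ Sum.inl) x + dotp (ω ∘ Sum.inr) ![1, 1, 0, 0])).val))
      = (-1:ℤ)^((1 + (ω ∘ Sum.inr) 0 + (ω ∘ Sum.inr) 1 : ZMod 2).val) * WHT c (ω ∘ Sum.inl) :=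
    Sval' _ _ _ _ _ (by
      intro x
      rw [dotp4]
      simp only [Matrix.cons_val_zero, Matrix.cons_val_one, Matrix.head_cons,
        Matrix.cons_val_two, Matrix.tail_cons, Matrix.cons_val_three]
      generalize a x = p
      generalize b x = q
      generalize c x = s
      generalize (ω ∘ Sum.inr) 0 = w0
      generalize (ω ∘ Sum.inr) 1 = w1
      generalize (ω ∘ Sum.inr) 2 = w2
      generalize (ω ∘ Sum.inr) 3 = w3
      revert p q s w0 w1 w2 w3
      decide)
  have E13 : (∑ x : Fin r → ZMod 2, (-1:ℤ)^((b x * (1 + 1) + a x * (1 + 1 + 0) + (c x + 1) * (1 + 0) + (1 + 1) * 1 +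
      (dotp (ω ∘ Sum.inl) x + dotp (ω ∘ Sum.inr) ![1, 1, 0, 1])).val))
      = (-1:ℤ)^((1 + (ω ∘ Sum.inr) 0 + (ω ∘ Sum.inr) 1 + (ω ∘ Sum.inr) 3 : ZMod 2).val) * WHT c (ω ∘ Sum.inl) :=
    Sval' _ _ _ _ _ (by
      intro x
      rw [dotp4]
      simp only [Matrix.cons_val_zero, Matrix.cons_val_one, Matrix.head_cons,
        Matrix.cons_val_two, Matrix.tail_cons, Matrix.cons_val_three]
      generalize a x = p
      generalize b x = q
      generalize c x = s
      generalize (ω ∘ Sum.inr) 0 = w0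
      generalize (ω ∘ Sum.inr) 1 = w1
      generalize (ω ∘ Sum.inr) 2 = w2
      generalize (ω ∘ Sum.inr) 3 = w3
      revert p q s w0 w1 w2 w3
      decide)
  have E14 : (∑ x : Fin r → ZMod 2, (-1:ℤ)^((b x * (1 + 1) + a x * (1 + 1 + 1) + (c x + 1) * (1 + 1) + (1 + 1) * 0 +
      (dotp (ω ∘ Sum.inl) x + dotp (ω ∘ Sum.inr) ![1, 1, 1, 0])).val))
      = (-1:ℤ)^(((ω ∘ Sum.inr) 0 + (ω ∘ Sum.inr) 1 + (ω ∘ Sum.inr) 2 : ZMod 2).val) * WHT a (ω ∘ Sum.inl) :=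
    Sval' _ _ _ _ _ (by
      intro x
      rw [dotp4]
      simp only [Matrix.cons_val_zero, Matrix.cons_val_one, Matrix.head_cons,
        Matrix.cons_val_two, Matrix.tail_cons, Matrix.cons_val_three]
      generalize a x = p
      generalize b x = q
      generalize c x = s
      generalize (ω ∘ Sum.inr) 0 = w0
      generalize (ω ∘ Sum.inr) 1 = w1
      generalize (ω ∘ Sum.inr) 2 = w2
      generalize (ω ∘ Sum.inr) 3 = w3
      revert p q s w0 w1 w2 w3
      decide)
  have E15 : (∑ x : Fin r → ZMod 2, (-1:ℤ)^((b x * (1 + 1) + a x * (1 + 1 + 1) + (c x + 1) * (1 + 1) + (1 + 1) * 1 +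
      (dotp (ω ∘ Sum.inl) x + dotp (ω ∘ Sum.inr) ![1, 1, 1, 1])).val))
      = (-1:ℤ)^(((ω ∘ Sum.inr) 0 + (ω ∘ Sum.inr) 1 + (ω ∘ Sum.inr) 2 + (ω ∘ Sum.inr) 3 : ZMod 2).val) * WHT a (ω ∘ Sum.inl) :=
    Sval' _ _ _ _ _ (by
      intro x
      rw [dotp4]
      simp only [Matrix.cons_val_zero, Matrix.cons_val_one, Matrix.head_cons,
        Matrix.cons_val_two, Matrix.tail_cons, Matrix.cons_val_three]
      generalize a x = p
      generalize b x = q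
      generalize c x = s
      generalize (ω ∘ Sum.inr) 0 = w0
      generalize (ω ∘ Sum.inr) 1 = w1
      generalize (ω ∘ Sum.inr) 2 = w2
      generalize (ω ∘ Sum.inr) 3 = w3
      revert p q s w0 w1 w2 w3
      decide)
  rw [E0, E1, E2, E3, E4, E5, E6, E7, E8, E9, E10, E11, E12, E13, E14, E15]
  have hcard : Fintype.card (Fin r ⊕ Fin 4) / 2 = k + 2 := by
    simp [Fintype.card_sum, hk]; omega
  rw [hcard, show ((2:ℤ)^(k+2)) = 4 * 2^k from by ring]
  have hcr : Fintype.card (Fin r) / 2 = k := by simp [hk]; omega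
  have hA0 := ha (ω ∘ Sum.inl); rw [hcr] at hA0
  have hB0 := hb (ω ∘ Sum.inl); rw [hcr] at hB0
  have hC0 := hc (ω ∘ Sum.inl); rw [hcr] at hC0
  have hD0 := habc (ω ∘ Sum.inl); rw [hcr] at hD0
  have hA := (abs_eq (show (0:ℤ) ≤ 2^k by positivity)).mp hA0
  have hB := (abs_eq (show (0:ℤ) ≤ 2^k by positivity)).mp hB0
  have hC := (abs_eq (show (0:ℤ) ≤ 2^k by positivity)).mp hC0
  have hD := (abs_eq (show (0:ℤ) ≤ 2^k by positivity)).mp hD0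
  simp only [sign_add, ZMod.val_zero, ZMod.val_one, pow_zero, pow_one]
  rw [abs_eq (by positivity)]
  rcases tpm ((ω ∘ Sum.inr) 0) with ht0 | ht0 <;>
  rcases tpm ((ω ∘ Sum.inr) 1) with ht1 | ht1 <;>
  rcases tpm ((ω ∘ Sum.inr) 2) with ht2 | ht2 <;>
  rcases tpm ((ω ∘ Sum.inr) 3) with ht3 | ht3 <;>
  rcases hA with hA | hA <;>
  rcases hB with hB | hB <;>
  rcases hC with hC | hC <;>
  rcases hD with hD | hD <;>
  rw [ht0, ht1, ht2, ht3, hA, hB, hC, hD] <;>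
  first
    | (left; ring1)
    | (right; ring1)
end

section
/- Let r be even and let f₁, f₂, f₃, f₄ be bent functions on 𝔽₂^r such that f₄ = f₁ ⊕ f₂ ⊕ f₃ and the duals satisfy f₁* ⊕ f₂* ⊕ f₃* ⊕ f₄* = 1 (the constant-one function). Then 𝔣 : 𝔽₂^r × 𝔽₂^2 → 𝔽₂ defined by 𝔣(x, y₁, y₂) = f₁(x) ⊕ y₁(f₁(x) ⊕ f₃(x)) ⊕ y₂(f₁(x) ⊕ f₂(x)) is a bent function on 𝔽₂^{r+2}. -/
open Finset

/- Auxiliary material -/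

def χ (a : ZMod 2) : ℤ := (-1) ^ a.val

lemma χ_pow (a : ZMod 2) : ((-1 : ℤ)) ^ a.val = χ a := rfl

lemma χ_add (a b : ZMod 2) : χ (a + b) = χ a * χ b := by revert a b; decide

lemma zmod2_sum (g : ZMod 2 → ℤ) : ∑ y : ZMod 2, g y = g 0 + g 1 :=
  Fin.sum_univ_two g

lemma key (a b c d p q : ZMod 2) (h : a + b + c + d = 1) :
    |χ 0 * χ a + χ q * χ b + (χ p * χ c + χ (p + q) * χ d)| = 2 := by
  revert a b c d p q; decide

def splitEquiv (r : ℕ) :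
    ((Fin r ⊕ Fin 2) → ZMod 2) ≃ ((Fin r → ZMod 2) × (ZMod 2 × ZMod 2)) where
  toFun x := (x ∘ Sum.inl, (x (Sum.inr 0), x (Sum.inr 1)))
  invFun p := Sum.elim p.1 ![p.2.1, p.2.2]
  left_inv x := by
    funext i
    cases i with
    | inl j => rfl
    | inr j => fin_cases j <;> simp
  right_inv p := by simp

lemma L00 (a b c w p q : ZMod 2) :
    a + 0 * (a + c) + 0 * (a + b) + (w + (p * 0 + q * 0)) = a + w + 0 := by
  revert a b c w p q; decide

lemma L01 (a b c w p q : ZMod 2) :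
    a + 0 * (a + c) + 1 * (a + b) + (w + (p * 0 + q * 1)) = b + w + q := by
  revert a b c w p q; decide

lemma L10 (a b c w p q : ZMod 2) :
    a + 1 * (a + c) + 0 * (a + b) + (w + (p * 1 + q * 0)) = c + w + p := by
  revert a b c w p q; decide

lemma L11 (a b c w p q : ZMod 2) :
    a + 1 * (a + c) + 1 * (a + b) + (w + (p * 1 + q * 1)) = a + b + c + w + (p + q) := by
  revert a b c w p q; decide

lemma sum_shift {r : ℕ} (f : (Fin r → ZMod 2) → ZMod 2) (w : Fin r → ZMod 2) (c : ZMod 2) :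
    ∑ x : Fin r → ZMod 2, χ (f x + dotp w x + c) = χ c * WHT f w := by
  rw [WHT, Finset.mul_sum]
  refine Finset.sum_congr rfl fun x _ => ?_
  rw [χ_pow, χ_add, mul_comm]

/-- Bent concatenation: if `f₁, f₂, f₃, f₄` are bent on `𝔽₂^r` with
`f₄ = f₁ ⊕ f₂ ⊕ f₃` and `f₁* ⊕ f₂* ⊕ f₃* ⊕ f₄* = 1`, then
`𝔣(x,y₁,y₂) = f₁(x) ⊕ y₁(f₁⊕f₃)(x) ⊕ y₂(f₁⊕f₂)(x)` is bent on `𝔽₂^(r+2)`. -/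
theorem stmt9 {r : ℕ} (hre : Even r)
    (f₁ f₂ f₃ f₄ : (Fin r → ZMod 2) → ZMod 2)
    (d₁ d₂ d₃ d₄ : (Fin r → ZMod 2) → ZMod 2)
    (h₁ : IsDualBent f₁ d₁) (h₂ : IsDualBent f₂ d₂)
    (h₃ : IsDualBent f₃ d₃) (h₄ : IsDualBent f₄ d₄)
    (hsum : ∀ x, f₄ x = f₁ x + f₂ x + f₃ x)
    (hdual : ∀ x, d₁ x + d₂ x + d₃ x + d₄ x = 1) :
    IsBent (fun x : (Fin r ⊕ Fin 2) → ZMod 2 =>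
      f₁ (x ∘ Sum.inl) +
      x (Sum.inr 0) * (f₁ (x ∘ Sum.inl) + f₃ (x ∘ Sum.inl)) +
      x (Sum.inr 1) * (f₁ (x ∘ Sum.inl) + f₂ (x ∘ Sum.inl))) := by
  intro ω
  set u : Fin r → ZMod 2 := ω ∘ Sum.inl with hu
  have hd : ∀ (x₁ : Fin r → ZMod 2) (y₁ y₂ : ZMod 2),
      dotp ω (Sum.elim x₁ ![y₁, y₂]) =
        dotp u x₁ + (ω (Sum.inr 0) * y₁ + ω (Sum.inr 1) * y₂) := by
    intro x₁ y₁ y₂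
    show (∑ i, ω i * Sum.elim x₁ ![y₁, y₂] i) = _
    rw [Fintype.sum_sum_type, Fin.sum_univ_two]
    rfl
  have main : WHT (fun x : (Fin r ⊕ Fin 2) → ZMod 2 =>
      f₁ (x ∘ Sum.inl) +
      x (Sum.inr 0) * (f₁ (x ∘ Sum.inl) + f₃ (x ∘ Sum.inl)) +
      x (Sum.inr 1) * (f₁ (x ∘ Sum.inl) + f₂ (x ∘ Sum.inl))) ω =
      χ 0 * WHT f₁ u + χ (ω (Sum.inr 1)) * WHT f₂ u +
        (χ (ω (Sum.inr 0)) * WHT f₃ u +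
          χ (ω (Sum.inr 0) + ω (Sum.inr 1)) * WHT f₄ u) := by
    rw [WHT, ← Equiv.sum_comp (splitEquiv r).symm]
    simp only [Fintype.sum_prod_type]
    simp only [splitEquiv, Equiv.coe_fn_symm_mk, Sum.elim_comp_inl, Sum.elim_inr,
      Matrix.cons_val_zero, Matrix.cons_val_one, Matrix.head_cons]
    simp only [hd]
    simp only [zmod2_sum]
    simp only [L00, L01, L10, L11, ← hsum, χ_pow]
    simp only [Finset.sum_add_distrib, sum_shift]
  rw [main, h₁ u, h₂ u, h₃ u, h₄ u]
  simp only [Fintype.card_fin, χ_pow]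
  have hfac : χ 0 * (2 ^ (r / 2) * χ (d₁ u)) + χ (ω (Sum.inr 1)) * (2 ^ (r / 2) * χ (d₂ u)) +
      (χ (ω (Sum.inr 0)) * (2 ^ (r / 2) * χ (d₃ u)) +
        χ (ω (Sum.inr 0) + ω (Sum.inr 1)) * (2 ^ (r / 2) * χ (d₄ u))) =
      (2 ^ (r / 2) : ℤ) *
        (χ 0 * χ (d₁ u) + χ (ω (Sum.inr 1)) * χ (d₂ u) +
          (χ (ω (Sum.inr 0)) * χ (d₃ u) +
            χ (ω (Sum.inr 0) + ω (Sum.inr 1)) * χ (d₄ u))) := by ring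
  rw [hfac, abs_mul, key (d₁ u) (d₂ u) (d₃ u) (d₄ u) (ω (Sum.inr 0)) (ω (Sum.inr 1)) (hdual u)]
  have hcard : Fintype.card (Fin r ⊕ Fin 2) = r + 2 := by simp
  rw [hcard]
  have h2 : (r + 2) / 2 = r / 2 + 1 := Nat.add_div_right r (by norm_num)
  rw [h2, pow_succ]
  have : |(2 : ℤ) ^ (r / 2)| = 2 ^ (r / 2) := abs_of_nonneg (by positivity)
  rw [this]
end

section
/- Let r and m be even positive integers, let f₁, f₂ be bent functions on 𝔽₂^r and let g₁, g₂ be bent functions on 𝔽₂^m. Then 𝔣 : 𝔽₂^r × 𝔽₂^m × 𝔽₂^2 → 𝔽₂ defined by 𝔣(x, y, z₁, z₂) = f₂(x) ⊕ g₂(y) ⊕ (g₁(y) ⊕ g₂(y) ⊕ z₂)(f₁(x) ⊕ f₂(x) ⊕ z₁) is a bent function on 𝔽₂^{r+m+2}. -/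
open Finset

private lemma pt (P Q F G A B c₁ c₂ : ZMod 2) :
    (∑ z : Fin 2 → ZMod 2,
      (-1:ℤ) ^ ((P + Q + (G + z 1) * (F + z 0) + (A + (B + (c₁ * z 0 + c₂ * z 1)))).val))
      = 2 * (-1:ℤ)^((c₁*c₂).val) *
        ((-1:ℤ)^((P + c₁ * F + A).val) * (-1:ℤ)^((Q + c₂ * G + B).val)) := by
  revert P Q F G A B c₁ c₂; decide

private lemma half_eq {r u : ℕ} (h : r = u + u) : r / 2 = u := by omega

private lemma half_eq2 {r m u v : ℕ} (h : r = u + u) (h' : m = v + v) :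
    (r + m + 2) / 2 = u + v + 1 := by omega

private def tripleEquiv (r m : ℕ) :
    ((Fin r → ZMod 2) × (Fin m → ZMod 2) × (Fin 2 → ZMod 2)) ≃
      ((Fin r ⊕ (Fin m ⊕ Fin 2)) → ZMod 2) where
  toFun p := Sum.elim p.1 (Sum.elim p.2.1 p.2.2)
  invFun q := (fun i => q (.inl i), fun i => q (.inr (.inl i)), fun j => q (.inr (.inr j)))
  left_inv p := rfl
  right_inv q := by funext i; rcases i with i | i | i <;> rfl

/-- Generalized indirect sum B: for bent `f₁,f₂` on `𝔽₂^r` and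
`g₁,g₂` on `𝔽₂^m` (`r`, `m` even), the function
`𝔣(x,y,z₁,z₂) = f₂(x) ⊕ g₂(y) ⊕ (g₁(y)⊕g₂(y)⊕z₂)(f₁(x)⊕f₂(x)⊕z₁)`
is bent on `𝔽₂^(r+m+2)`. -/
theorem stmt11 {r m : ℕ} (hr : 0 < r) (hm : 0 < m) (hre : Even r) (hme : Even m)
    (f₁ f₂ : (Fin r → ZMod 2) → ZMod 2) (hf₁ : IsBent f₁) (hf₂ : IsBent f₂)
    (g₁ g₂ : (Fin m → ZMod 2) → ZMod 2) (hg₁ : IsBent g₁) (hg₂ : IsBent g₂) :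
    IsBent (fun x : (Fin r ⊕ (Fin m ⊕ Fin 2)) → ZMod 2 =>
      f₂ (fun i => x (Sum.inl i)) + g₂ (fun i => x (Sum.inr (Sum.inl i))) +
      (g₁ (fun i => x (Sum.inr (Sum.inl i))) + g₂ (fun i => x (Sum.inr (Sum.inl i))) +
        x (Sum.inr (Sum.inr 1))) *
      (f₁ (fun i => x (Sum.inl i)) + f₂ (fun i => x (Sum.inl i)) +
        x (Sum.inr (Sum.inr 0)))) := by
  intro ω
  have hdisj : ∀ c : ZMod 2, c = 0 ∨ c = 1 := by decide
  set a : Fin r → ZMod 2 := fun i => ω (Sum.inl i) with ha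
  set b : Fin m → ZMod 2 := fun i => ω (Sum.inr (Sum.inl i)) with hb
  set c₁ : ZMod 2 := ω (Sum.inr (Sum.inr 0)) with hc₁
  set c₂ : ZMod 2 := ω (Sum.inr (Sum.inr 1)) with hc₂
  have key : WHT (fun x : (Fin r ⊕ (Fin m ⊕ Fin 2)) → ZMod 2 =>
      f₂ (fun i => x (Sum.inl i)) + g₂ (fun i => x (Sum.inr (Sum.inl i))) +
      (g₁ (fun i => x (Sum.inr (Sum.inl i))) + g₂ (fun i => x (Sum.inr (Sum.inl i))) +
        x (Sum.inr (Sum.inr 1))) *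
      (f₁ (fun i => x (Sum.inl i)) + f₂ (fun i => x (Sum.inl i)) +
        x (Sum.inr (Sum.inr 0)))) ω
      = 2 * (-1:ℤ)^((c₁*c₂).val) *
        (WHT (fun x => f₂ x + c₁ * (f₁ x + f₂ x)) a *
         WHT (fun y => g₂ y + c₂ * (g₁ y + g₂ y)) b) := by
    rw [WHT, ← Equiv.sum_comp (tripleEquiv r m)]
    simp only [tripleEquiv, Equiv.coe_fn_mk, Sum.elim_inl, Sum.elim_inr, dotp,
      Fintype.sum_sum_type, Fin.sum_univ_two]
    rw [Fintype.sum_prod_type]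
    have step : ∀ x : Fin r → ZMod 2,
        (∑ p : (Fin m → ZMod 2) × (Fin 2 → ZMod 2),
          (-1:ℤ) ^ ((f₂ (fun i => x i) + g₂ (fun i => p.1 i) +
            (g₁ (fun i => p.1 i) + g₂ (fun i => p.1 i) + p.2 1) *
            (f₁ (fun i => x i) + f₂ (fun i => x i) + p.2 0) +
            ((∑ i, ω (Sum.inl i) * x i) +
              ((∑ i, ω (Sum.inr (Sum.inl i)) * p.1 i) +
                (ω (Sum.inr (Sum.inr 0)) * p.2 0 + ω (Sum.inr (Sum.inr 1)) * p.2 1)))).val))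
        = ∑ y : Fin m → ZMod 2, 2 * (-1:ℤ)^((c₁*c₂).val) *
            ((-1:ℤ)^((f₂ x + c₁ * (f₁ x + f₂ x) + dotp a x).val) *
             (-1:ℤ)^((g₂ y + c₂ * (g₁ y + g₂ y) + dotp b y).val)) := by
      intro x
      rw [Fintype.sum_prod_type]
      refine Finset.sum_congr rfl fun y _ => ?_
      have := pt (f₂ x) (g₂ y) (f₁ x + f₂ x) (g₁ y + g₂ y) (dotp a x) (dotp b y) c₁ c₂
      simp only [ha, hb, hc₁, hc₂, dotp] at this ⊢
      rw [← this]
    calc _ = ∑ x : Fin r → ZMod 2, ∑ y : Fin m → ZMod 2, 2 * (-1:ℤ)^((c₁*c₂).val) *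
            ((-1:ℤ)^((f₂ x + c₁ * (f₁ x + f₂ x) + dotp a x).val) *
             (-1:ℤ)^((g₂ y + c₂ * (g₁ y + g₂ y) + dotp b y).val)) :=
          Finset.sum_congr rfl fun x _ => step x
      _ = 2 * (-1:ℤ)^((c₁*c₂).val) *
            (WHT (fun x => f₂ x + c₁ * (f₁ x + f₂ x)) a *
             WHT (fun y => g₂ y + c₂ * (g₁ y + g₂ y)) b) := by
          rw [WHT, WHT, Finset.sum_mul_sum, Finset.mul_sum]
          exact Finset.sum_congr rfl fun x _ => by rw [Finset.mul_sum]
  have W1 : |WHT (fun x => f₂ x + c₁ * (f₁ x + f₂ x)) a| = 2 ^ (r / 2) := by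
    rcases hdisj c₁ with h | h <;> rw [h]
    · have e : (fun x => f₂ x + (0:ZMod 2) * (f₁ x + f₂ x)) = f₂ := by funext x; ring
      rw [e]; simpa using hf₂ a
    · have e : (fun x => f₂ x + (1:ZMod 2) * (f₁ x + f₂ x)) = f₁ := by
        funext x
        have h2 : ∀ u v : ZMod 2, v + 1 * (u + v) = u := by decide
        exact h2 _ _
      rw [e]; simpa using hf₁ a
  have W2 : |WHT (fun y => g₂ y + c₂ * (g₁ y + g₂ y)) b| = 2 ^ (m / 2) := by
    rcases hdisj c₂ with h | h <;> rw [h]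
    · have e : (fun y => g₂ y + (0:ZMod 2) * (g₁ y + g₂ y)) = g₂ := by funext y; ring
      rw [e]; simpa using hg₂ b
    · have e : (fun y => g₂ y + (1:ZMod 2) * (g₁ y + g₂ y)) = g₁ := by
        funext y
        have h2 : ∀ u v : ZMod 2, v + 1 * (u + v) = u := by decide
        exact h2 _ _
      rw [e]; simpa using hg₁ b
  rw [key, abs_mul, abs_mul, abs_mul, W1, W2]
  clear_value a b c₁ c₂
  obtain ⟨u, hu⟩ := hre
  obtain ⟨v, hv⟩ := hme
  have hcard : Fintype.card (Fin r ⊕ (Fin m ⊕ Fin 2)) = r + m + 2 := by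
    simp [Fintype.card_sum]; ring
  rw [hcard]
  have h1 : |(2:ℤ)| = 2 := by norm_num
  have h2 : |(-1:ℤ)^((c₁*c₂).val)| = 1 := by
    rw [abs_pow]; norm_num
  rw [h1, h2]
  have hr2 : r / 2 = u := half_eq hu
  have hm2 : m / 2 = v := half_eq hv
  have hrm2 : (r + m + 2) / 2 = u + v + 1 := half_eq2 hu hv
  rw [hr2, hm2, hrm2]
  ring
end
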